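/- For every 4-element subset B ⊆ {1,…,8}, the Cremona curve move Cr_B maps each vector C_a^{b,c} that is not of the form C_0^{i,j} with {i,j} ⊆ B to a vector C_{a'}^{b',c'} for some integer a' ≥ 0 and distinct b', c' ∈ {1,…,8}, with (a', {b',c'}) again not of the form (0, {i,j}) with {i,j} ⊆ B; moreover, this assignment, extended by sending C_0^{i,j} to C_0^{k,l} for {i,j} ⊆ B with {i,j,k,l} = B, is a bijection of the set {C_a^{b,c} : a ≥ 0, b ≠ c ∈ {1,…,8}} onto itself. -/
import Mathlib


/-- The Cremona curve move over a subset `B ⊆ {1,…,8}` (indexed by `Fin 8`),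
acting on a curve vector `(δ; μ_1,…,μ_8) ∈ ℤ⁹ = ℤ × (Fin 8 → ℤ)`. -/
def CrC (B : Finset (Fin 8)) (v : ℤ × (Fin 8 → ℤ)) : ℤ × (Fin 8 → ℤ) :=
  (v.1 + 2 * (v.1 - ∑ i ∈ B, v.2 i),
    fun i => if i ∈ B then v.2 i + (v.1 - ∑ i ∈ B, v.2 i) else v.2 i)

/-- The `(−1)`-curve vector `C_a^{b,c}`. -/
def Cv (a : ℕ) (b c : Fin 8) : ℤ × (Fin 8 → ℤ) :=
  (2 * (a : ℤ) + 1, fun i =>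
    if a % 2 = 0 then ((a / 2 : ℕ) : ℤ) + (if i = b ∨ i = c then 1 else 0)
    else (((a + 1) / 2 : ℕ) : ℤ) - (if i = b ∨ i = c then 1 else 0))

/-- `v` is of the form `C_0^{i,j}` with `{i,j} ⊆ B`. -/
def IsLine (B : Finset (Fin 8)) (v : ℤ × (Fin 8 → ℤ)) : Prop :=
  ∃ i j : Fin 8, i ≠ j ∧ i ∈ B ∧ j ∈ B ∧ v = Cv 0 i j

/-- `w` is obtained from `v` by a geometric Cremona curve move over `B`. -/
def GeomMove (B : Finset (Fin 8)) (v w : ℤ × (Fin 8 → ℤ)) : Prop :=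
  (∃ i j k l : Fin 8, i ≠ j ∧ k ≠ l ∧ ({i, j, k, l} : Finset (Fin 8)) = B ∧
      v = Cv 0 i j ∧ w = Cv 0 k l) ∨
  (¬ IsLine B v ∧ w = CrC B v)

/-- The set of all `(−1)`-curve vectors `C_a^{b,c}`. -/
def CSet : Set (ℤ × (Fin 8 → ℤ)) :=
  {v | ∃ (a : ℕ) (b c : Fin 8), b ≠ c ∧ v = Cv a b c}

/-! ### Auxiliary lemmas -/

lemma sum_pair_ind (B : Finset (Fin 8)) {b c : Fin 8} (hbc : b ≠ c) :
    ∑ i ∈ B, (if i = b ∨ i = c then (1:ℤ) else 0)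
      = (if b ∈ B then 1 else 0) + (if c ∈ B then 1 else 0) := by
  have h : ∀ i ∈ B, (if i = b ∨ i = c then (1:ℤ) else 0)
      = (if i = b then (1:ℤ) else 0) + (if i = c then 1 else 0) := by
    intro i _
    by_cases h1 : i = b <;> by_cases h2 : i = c <;> simp_all
  rw [Finset.sum_congr rfl h, Finset.sum_add_distrib,
    Finset.sum_ite_eq' B b (fun _ => (1:ℤ)), Finset.sum_ite_eq' B c (fun _ => (1:ℤ))]

lemma cv_even {a : ℕ} (hp : a % 2 = 0) (b c i : Fin 8) :
    (Cv a b c).2 i = ((a / 2 : ℕ) : ℤ) + (if i = b ∨ i = c then 1 else 0) := if_pos hp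

lemma cv_odd {a : ℕ} (hp : ¬ a % 2 = 0) (b c i : Fin 8) :
    (Cv a b c).2 i = (((a + 1) / 2 : ℕ) : ℤ) - (if i = b ∨ i = c then 1 else 0) := if_neg hp

lemma cv_sum_even (B : Finset (Fin 8)) (hB : B.card = 4) {b c : Fin 8} (hbc : b ≠ c)
    {a : ℕ} (hp : a % 2 = 0) :
    ∑ i ∈ B, (Cv a b c).2 i =
      4 * ((a/2 : ℕ) : ℤ) + ((if b∈B then (1:ℤ) else 0) + (if c∈B then 1 else 0)) := by
  rw [Finset.sum_congr rfl (fun i _ => cv_even hp b c i), Finset.sum_add_distrib,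
    Finset.sum_const, hB, sum_pair_ind B hbc]
  ring

lemma cv_sum_odd (B : Finset (Fin 8)) (hB : B.card = 4) {b c : Fin 8} (hbc : b ≠ c)
    {a : ℕ} (hp : ¬ a % 2 = 0) :
    ∑ i ∈ B, (Cv a b c).2 i =
      4 * (((a+1)/2 : ℕ) : ℤ) - ((if b∈B then (1:ℤ) else 0) + (if c∈B then 1 else 0)) := by
  rw [Finset.sum_congr rfl (fun i _ => cv_odd hp b c i), Finset.sum_sub_distrib,
    Finset.sum_const, hB, sum_pair_ind B hbc]
  ring

lemma cv_inj {a a' : ℕ} {b c b' c' : Fin 8} (h : Cv a b c = Cv a' b' c') :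
    a = a' ∧ ∀ i, (i = b ∨ i = c) ↔ (i = b' ∨ i = c') := by
  have h1 := congrArg Prod.fst h
  simp only [Cv] at h1
  have ha : a = a' := by omega
  subst ha
  refine ⟨rfl, fun i => ?_⟩
  have h3 : (Cv a b c).2 i = (Cv a b' c').2 i := by rw [h]
  by_cases hP : (i = b ∨ i = c) <;> by_cases hQ : (i = b' ∨ i = c')
  · exact iff_of_true hP hQ
  · exfalso
    by_cases hp : a % 2 = 0
    · rw [cv_even hp, cv_even hp, if_pos hP, if_neg hQ] at h3; omega
    · rw [cv_odd hp, cv_odd hp, if_pos hP, if_neg hQ] at h3; omega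
  · exfalso
    by_cases hp : a % 2 = 0
    · rw [cv_even hp, cv_even hp, if_neg hP, if_pos hQ] at h3; omega
    · rw [cv_odd hp, cv_odd hp, if_neg hP, if_pos hQ] at h3; omega
  · exact iff_of_false hP hQ

lemma cv_pair_congr (a : ℕ) {b c b' c' : Fin 8}
    (h : ∀ i : Fin 8, (i = b ∨ i = c) ↔ (i = b' ∨ i = c')) : Cv a b c = Cv a b' c' := by
  unfold Cv
  refine Prod.ext rfl (funext fun i => ?_)
  simp only [h i]

lemma crc_eq_cv (B : Finset (Fin 8)) (a : ℕ) (b c : Fin 8) (a' : ℕ) (b' c' : Fin 8)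
    (h1 : (2*(a:ℤ)+1) + 2*((2*(a:ℤ)+1) - ∑ i ∈ B, (Cv a b c).2 i) = 2*(a':ℤ)+1)
    (h2 : ∀ i, (if i ∈ B then (Cv a b c).2 i + ((2*(a:ℤ)+1) - ∑ i ∈ B, (Cv a b c).2 i)
        else (Cv a b c).2 i) = (Cv a' b' c').2 i) :
    CrC B (Cv a b c) = Cv a' b' c' := Prod.ext h1 (funext h2)

lemma pair_sdiff (B : Finset (Fin 8)) (hB : B.card = 4) {b c : Fin 8} (hbc : b ≠ c)
    (hb : b ∈ B) (hc : c ∈ B) :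
    ∃ b' c' : Fin 8, b' ≠ c' ∧ ∀ i, (i = b' ∨ i = c') ↔ (i ∈ B ∧ ¬(i = b ∨ i = c)) := by
  have hsub : ({b, c} : Finset (Fin 8)) ⊆ B := by
    intro x hx; simp only [Finset.mem_insert, Finset.mem_singleton] at hx
    rcases hx with rfl | rfl <;> assumption
  have hcard : (B \ {b, c}).card = 2 := by
    rw [Finset.card_sdiff_of_subset hsub, hB, Finset.card_insert_of_notMem (by simp [hbc]),
      Finset.card_singleton]
  obtain ⟨b', c', hne, hS⟩ := Finset.card_eq_two.mp hcard
  refine ⟨b', c', hne, fun i => ?_⟩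
  have h1 : i ∈ B \ ({b, c} : Finset (Fin 8)) ↔ i = b' ∨ i = c' := by
    rw [hS]; simp
  rw [← h1, Finset.mem_sdiff]
  simp

lemma pair_compl (B : Finset (Fin 8)) (hB : B.card = 4) {b c : Fin 8} (hbc : b ≠ c)
    (hb : b ∉ B) (hc : c ∉ B) :
    ∃ b' c' : Fin 8, b' ≠ c' ∧ b' ∉ B ∧
      ∀ i, (i = b' ∨ i = c') ↔ (i ∉ B ∧ ¬(i = b ∨ i = c)) := by
  have hdisj : Disjoint B ({b, c} : Finset (Fin 8)) := by
    rw [Finset.disjoint_right]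
    intro x hx; simp only [Finset.mem_insert, Finset.mem_singleton] at hx
    rcases hx with rfl | rfl <;> assumption
  have hcard : ((B ∪ {b, c})ᶜ : Finset (Fin 8)).card = 2 := by
    rw [Finset.card_compl, Finset.card_union_of_disjoint hdisj, hB,
      Finset.card_insert_of_notMem (by simp [hbc]), Finset.card_singleton]
    simp
  obtain ⟨b', c', hne, hS⟩ := Finset.card_eq_two.mp hcard
  have hmem : ∀ i : Fin 8, (i = b' ∨ i = c') ↔ (i ∉ B ∧ ¬(i = b ∨ i = c)) := by
    intro i
    have h1 : i ∈ ((B ∪ {b, c})ᶜ : Finset (Fin 8)) ↔ i = b' ∨ i = c' := by rw [hS]; simp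
    rw [← h1, Finset.mem_compl, Finset.mem_union]
    simp only [Finset.mem_insert, Finset.mem_singleton]
    tauto
  exact ⟨b', c', hne, ((hmem b').mp (Or.inl rfl)).1, hmem⟩

lemma crc_fix (B : Finset (Fin 8)) (v : ℤ × (Fin 8 → ℤ))
    (h0 : v.1 - ∑ i ∈ B, v.2 i = 0) : CrC B v = v := by
  unfold CrC
  rw [h0]
  refine Prod.ext (by ring) (funext fun i => ?_)
  by_cases hi : i ∈ B <;> simp [hi]

lemma crc_invol (B : Finset (Fin 8)) (hB : B.card = 4) (v : ℤ × (Fin 8 → ℤ)) :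
    CrC B (CrC B v) = v := by
  obtain ⟨d, μ⟩ := v
  have hs : ∑ i ∈ B, (CrC B (d, μ)).2 i
      = ∑ i ∈ B, μ i + 4 * (d - ∑ i ∈ B, μ i) := by
    have h : ∀ i ∈ B, (CrC B (d, μ)).2 i = μ i + (d - ∑ i ∈ B, μ i) := by
      intro i hi; simp only [CrC, if_pos hi]
    rw [Finset.sum_congr rfl h, Finset.sum_add_distrib, Finset.sum_const, hB]
    ring
  refine Prod.ext ?_ (funext fun i => ?_)
  · show (CrC B (d,μ)).1 + 2 * ((CrC B (d,μ)).1 - ∑ i ∈ B, (CrC B (d,μ)).2 i) = d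
    rw [hs]
    show (d + 2*(d - ∑ i ∈ B, μ i)) + 2*((d + 2*(d - ∑ i ∈ B, μ i)) - _) = d
    ring
  · show (if i ∈ B then (CrC B (d,μ)).2 i + ((CrC B (d,μ)).1 - ∑ i ∈ B, (CrC B (d,μ)).2 i)
        else (CrC B (d,μ)).2 i) = μ i
    rw [hs]
    by_cases hi : i ∈ B
    · rw [if_pos hi]
      show (if i ∈ B then μ i + (d - ∑ i ∈ B, μ i) else μ i)
          + ((d + 2*(d - ∑ i ∈ B, μ i)) - _) = μ i
      rw [if_pos hi]; ring
    · rw [if_neg hi]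
      show (if i ∈ B then μ i + (d - ∑ i ∈ B, μ i) else μ i) = μ i
      rw [if_neg hi]

lemma four_sdiff {i j k l : Fin 8} {B : Finset (Fin 8)} (hij : i ≠ j) (hkl : k ≠ l)
    (hB4 : ({i, j, k, l} : Finset (Fin 8)) = B) (hB : B.card = 4) :
    B \ ({i, j} : Finset (Fin 8)) = {k, l} ∧ B \ ({k, l} : Finset (Fin 8)) = {i, j} := by
  subst hB4
  have hc2 : ({k, l} : Finset (Fin 8)).card = 2 := by
    rw [Finset.card_insert_of_notMem (by simp [hkl]), Finset.card_singleton]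
  have hjkl : j ∉ ({k, l} : Finset (Fin 8)) := by
    intro h
    have e : ({j, k, l} : Finset (Fin 8)) = {k, l} := Finset.insert_eq_self.mpr h
    have h3 : ({i, j, k, l} : Finset (Fin 8)).card ≤ 3 := by
      show (insert i ({j, k, l} : Finset (Fin 8))).card ≤ 3
      rw [e]
      calc (insert i ({k, l} : Finset (Fin 8))).card ≤ ({k,l}:Finset (Fin 8)).card + 1 :=
            Finset.card_insert_le _ _
        _ ≤ 3 := by rw [hc2]
    omega
  have hikl : i ∉ ({k, l} : Finset (Fin 8)) := by
    intro h
    have h2 : i ∈ ({j, k, l} : Finset (Fin 8)) := by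
      simp only [Finset.mem_insert, Finset.mem_singleton] at h ⊢; tauto
    have e : ({i, j, k, l} : Finset (Fin 8)) = {j, k, l} := Finset.insert_eq_self.mpr h2
    have h3 : ({i, j, k, l} : Finset (Fin 8)).card ≤ 3 := by
      rw [e]
      calc ({j, k, l} : Finset (Fin 8)).card ≤ ({k,l}:Finset (Fin 8)).card + 1 :=
            Finset.card_insert_le _ _
        _ ≤ 3 := by rw [hc2]
    omega
  simp only [Finset.mem_insert, Finset.mem_singleton, not_or] at hjkl hikl
  obtain ⟨hik, hil⟩ := hikl
  obtain ⟨hjk, hjl⟩ := hjkl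
  constructor <;>
      (ext x; simp only [Finset.mem_sdiff, Finset.mem_insert, Finset.mem_singleton]) <;>
    constructor
  · rintro ⟨(rfl|rfl|rfl|rfl), hx⟩ <;> tauto
  · rintro (rfl|rfl) <;> exact ⟨by tauto, by tauto⟩
  · rintro ⟨(rfl|rfl|rfl|rfl), hx⟩ <;> tauto
  · rintro (rfl|rfl) <;> exact ⟨by tauto, by tauto⟩

lemma crc_cv (B : Finset (Fin 8)) (hB : B.card = 4) (a : ℕ) (b c : Fin 8)
    (hbc : b ≠ c) (hnl : ¬ (a = 0 ∧ b ∈ B ∧ c ∈ B)) :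
    ∃ a' b' c', b' ≠ c' ∧ CrC B (Cv a b c) = Cv a' b' c' ∧
      ¬ (a' = 0 ∧ b' ∈ B ∧ c' ∈ B) := by
  by_cases hb : b ∈ B <;> by_cases hc : c ∈ B
  · -- b ∈ B, c ∈ B
    have ha : a ≠ 0 := fun h => hnl ⟨h, hb, hc⟩
    have hIB : ∀ i : Fin 8, (i = b ∨ i = c) → i ∈ B := by
      rintro i (rfl | rfl) <;> assumption
    obtain ⟨b', c', hne, hmem⟩ := pair_sdiff B hB hbc hb hc
    by_cases hp : a % 2 = 0
    · -- even, a ≥ 2 ; a' = a - 1 (odd, ≥ 1)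
      have hSum : ∑ i ∈ B, (Cv a b c).2 i = 2*(a:ℤ) + 2 := by
        rw [cv_sum_even B hB hbc hp, if_pos hb, if_pos hc]; omega
      have hp' : ¬ (a - 1) % 2 = 0 := by omega
      refine ⟨a - 1, b', c', hne, crc_eq_cv B a b c (a-1) b' c' ?_ ?_,
        by rintro ⟨h0, -, -⟩; omega⟩
      · rw [hSum]; omega
      · intro i
        rw [hSum, cv_even hp b c i, cv_odd hp' b' c' i]
        simp only [hmem i]
        by_cases hI : i = b ∨ i = c
        · have hiB := hIB i hI
          simp [hI, hiB] <;> omega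
        · by_cases hiB : i ∈ B <;> simp [hI, hiB] <;> omega
    · -- odd ; a' = a + 1 (even)
      have hSum : ∑ i ∈ B, (Cv a b c).2 i = 2*(a:ℤ) := by
        rw [cv_sum_odd B hB hbc hp, if_pos hb, if_pos hc]; omega
      have hp' : (a + 1) % 2 = 0 := by omega
      refine ⟨a + 1, b', c', hne, crc_eq_cv B a b c (a+1) b' c' ?_ ?_,
        by rintro ⟨h0, -, -⟩; omega⟩
      · rw [hSum]; omega
      · intro i
        rw [hSum, cv_odd hp b c i, cv_even hp' b' c' i]
        simp only [hmem i]
        by_cases hI : i = b ∨ i = c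
        · have hiB := hIB i hI
          simp [hI, hiB] <;> omega
        · by_cases hiB : i ∈ B <;> simp [hI, hiB] <;> omega
  · -- b ∈ B, c ∉ B : identity
    refine ⟨a, b, c, hbc, crc_fix B _ ?_, hnl⟩
    show 2*(a:ℤ)+1 - ∑ i ∈ B, (Cv a b c).2 i = 0
    by_cases hp : a % 2 = 0
    · rw [cv_sum_even B hB hbc hp, if_pos hb, if_neg hc]; omega
    · rw [cv_sum_odd B hB hbc hp, if_pos hb, if_neg hc]; omega
  · -- b ∉ B, c ∈ B : identity
    refine ⟨a, b, c, hbc, crc_fix B _ ?_, hnl⟩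
    show 2*(a:ℤ)+1 - ∑ i ∈ B, (Cv a b c).2 i = 0
    by_cases hp : a % 2 = 0
    · rw [cv_sum_even B hB hbc hp, if_neg hb, if_pos hc]; omega
    · rw [cv_sum_odd B hB hbc hp, if_neg hb, if_pos hc]; omega
  · -- b ∉ B, c ∉ B
    have hIB : ∀ i : Fin 8, (i = b ∨ i = c) → i ∉ B := by
      rintro i (rfl | rfl) <;> assumption
    obtain ⟨b', c', hne, hb', hmem⟩ := pair_compl B hB hbc hb hc
    by_cases hp : a % 2 = 0
    · -- even ; a' = a + 1 (odd)
      have hSum : ∑ i ∈ B, (Cv a b c).2 i = 2*(a:ℤ) := by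
        rw [cv_sum_even B hB hbc hp, if_neg hb, if_neg hc]; omega
      have hp' : ¬ (a + 1) % 2 = 0 := by omega
      refine ⟨a + 1, b', c', hne, crc_eq_cv B a b c (a+1) b' c' ?_ ?_,
        by rintro ⟨h0, -, -⟩; omega⟩
      · rw [hSum]; omega
      · intro i
        rw [hSum, cv_even hp b c i, cv_odd hp' b' c' i]
        simp only [hmem i]
        by_cases hI : i = b ∨ i = c
        · have hiB := hIB i hI
          simp [hI, hiB] <;> omega
        · by_cases hiB : i ∈ B <;> simp [hI, hiB] <;> omega
    · -- odd ; a' = a - 1 (even, maybe 0)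
      have hSum : ∑ i ∈ B, (Cv a b c).2 i = 2*(a:ℤ) + 2 := by
        rw [cv_sum_odd B hB hbc hp, if_neg hb, if_neg hc]; omega
      have hp' : (a - 1) % 2 = 0 := by omega
      refine ⟨a - 1, b', c', hne, crc_eq_cv B a b c (a-1) b' c' ?_ ?_,
        by rintro ⟨-, hbB, -⟩; exact hb' hbB⟩
      · rw [hSum]; omega
      · intro i
        rw [hSum, cv_odd hp b c i, cv_even hp' b' c' i]
        simp only [hmem i]
        by_cases hI : i = b ∨ i = c
        · have hiB := hIB i hI
          simp [hI, hiB] <;> omega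
        · by_cases hiB : i ∈ B <;> simp [hI, hiB] <;> omega

lemma isLine_iff (B : Finset (Fin 8)) {a : ℕ} {b c : Fin 8} (hbc : b ≠ c) :
    IsLine B (Cv a b c) ↔ (a = 0 ∧ b ∈ B ∧ c ∈ B) := by
  constructor
  · rintro ⟨i, j, hij, hiB, hjB, heq⟩
    obtain ⟨ha, hiff⟩ := cv_inj heq
    refine ⟨ha, ?_, ?_⟩
    · rcases (hiff b).mp (Or.inl rfl) with rfl | rfl <;> assumption
    · rcases (hiff c).mp (Or.inr rfl) with rfl | rfl <;> assumption
  · rintro ⟨rfl, hbB, hcB⟩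
    exact ⟨b, c, hbc, hbB, hcB, rfl⟩

theorem geom_move_bijection_on_neg_one_curves
    (B : Finset (Fin 8)) (hB : B.card = 4) :
    (∀ (a : ℕ) (b c : Fin 8), b ≠ c → ¬ IsLine B (Cv a b c) →
      ∃ (a' : ℕ) (b' c' : Fin 8), b' ≠ c' ∧ CrC B (Cv a b c) = Cv a' b' c' ∧
        ¬ IsLine B (Cv a' b' c')) ∧
    (∀ g : ℤ × (Fin 8 → ℤ) → ℤ × (Fin 8 → ℤ),
      (∀ v, GeomMove B v (g v)) → Set.BijOn g CSet CSet) := by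
  constructor
  · intro a b c hbc hnl
    obtain ⟨a', b', c', h1, h2, h3⟩ :=
      crc_cv B hB a b c hbc (fun h => hnl ((isLine_iff B hbc).mpr h))
    exact ⟨a', b', c', h1, h2, fun h => h3 ((isLine_iff B h1).mp h)⟩
  · intro g hg
    have lineStep : ∀ (b c : Fin 8), b ≠ c → b ∈ B → c ∈ B →
        ∃ k l : Fin 8, k ≠ l ∧ k ∈ B ∧ l ∈ B ∧ g (Cv 0 b c) = Cv 0 k l ∧
          B \ ({k, l} : Finset (Fin 8)) = {b, c} := by
      intro b c hbc hbB hcB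
      rcases hg (Cv 0 b c) with ⟨i, j, k, l, hij, hkl, hB4, hv, hgv⟩ | ⟨hnl, -⟩
      · obtain ⟨-, hiff⟩ := cv_inj hv
        have hpair : ({b, c} : Finset (Fin 8)) = {i, j} := by
          ext x
          simp only [Finset.mem_insert, Finset.mem_singleton]
          exact hiff x
        obtain ⟨hd1, hd2⟩ := four_sdiff hij hkl hB4 hB
        have hkB : k ∈ B := by rw [← hB4]; simp
        have hlB : l ∈ B := by rw [← hB4]; simp
        refine ⟨k, l, hkl, hkB, hlB, hgv, ?_⟩
        rw [hd2, hpair]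
      · exact absurd ⟨b, c, hbc, hbB, hcB, rfl⟩ hnl
    have key : ∀ v ∈ CSet, g v ∈ CSet ∧ g (g v) = v := by
      rintro v ⟨a, b, c, hbc, rfl⟩
      by_cases hl : a = 0 ∧ b ∈ B ∧ c ∈ B
      · obtain ⟨rfl, hbB, hcB⟩ := hl
        obtain ⟨k, l, hkl, hkB, hlB, hgv, hsd⟩ := lineStep b c hbc hbB hcB
        refine ⟨by rw [hgv]; exact ⟨0, k, l, hkl, rfl⟩, ?_⟩
        rw [hgv]
        obtain ⟨k', l', hk'l', hk'B, hl'B, hgv', hsd'⟩ := lineStep k l hkl hkB hlB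
        rw [hgv']
        have hsub : ({k', l'} : Finset (Fin 8)) ⊆ B := by
          intro x hx
          simp only [Finset.mem_insert, Finset.mem_singleton] at hx
          rcases hx with rfl | rfl <;> assumption
        have hset : ({k', l'} : Finset (Fin 8)) = {b, c} := by
          rw [← Finset.sdiff_sdiff_eq_self hsub, hsd', hsd]
        apply cv_pair_congr
        intro x
        have hx : x ∈ ({k', l'} : Finset (Fin 8)) ↔ x ∈ ({b, c} : Finset (Fin 8)) := by
          rw [hset]
        simpa using hx
      · have hnl : ¬ IsLine B (Cv a b c) := fun h => hl ((isLine_iff B hbc).mp h)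
        have hgv : g (Cv a b c) = CrC B (Cv a b c) := by
          rcases hg (Cv a b c) with ⟨i, j, k, l, hij, hkl, hB4, hv, -⟩ | ⟨-, h⟩
          · exact absurd ⟨i, j, hij, by rw [← hB4]; simp, by rw [← hB4]; simp, hv⟩ hnl
          · exact h
        obtain ⟨a', b', c', h1, h2, h3⟩ := crc_cv B hB a b c hbc hl
        refine ⟨by rw [hgv, h2]; exact ⟨a', b', c', h1, rfl⟩, ?_⟩
        rw [hgv, h2]
        have hnl' : ¬ IsLine B (Cv a' b' c') := fun h => h3 ((isLine_iff B h1).mp h)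
        have hgv' : g (Cv a' b' c') = CrC B (Cv a' b' c') := by
          rcases hg (Cv a' b' c') with ⟨i, j, k, l, hij, hkl, hB4, hv, -⟩ | ⟨-, h⟩
          · exact absurd ⟨i, j, hij, by rw [← hB4]; simp, by rw [← hB4]; simp, hv⟩ hnl'
          · exact h
        rw [hgv', ← h2, crc_invol B hB]
    exact ⟨fun v hv => (key v hv).1,
      fun v hv w hw h => by rw [← (key v hv).2, ← (key w hw).2, h],
      fun w hw => ⟨g w, (key w hw).1, (key w hw).2⟩⟩
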